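/- Naive fine-tuning returns the pretrained model under overlapping features: w_t = w_o, i.e., even when the remaining and forgetting data share overlapping features, the model obtained by fine-tuning on a subset of the remaining data equals the pretrained model, so all information about the forgetting data is preserved. -/

import Mathlib

/-!
The projection `P_t` onto the column space of `X_t = X_r S` factors through the pretrained
projection `P` (the columns of `X_t` lie in the column space of `X`), and it annihilates the
forgetting-only component `w_*^f`, since `X_rᵀ w_*^f = 0` by disjointness of supports. Hence
`P_t w_o = P_t P w_* = P_t w_* = P_t (w_*^r + w_*^lap)`, and the fine-tuning update
`(I - P_t) w_o + P_t (w_*^r + w_*^lap)` returns `w_o` unchanged.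
-/

open Matrix

namespace Matrix

variable {R : Type*} [CommRing R] {m n k : Type*}

section colProj

variable [Fintype m] [Fintype n] [DecidableEq n]

/-- Projection onto the column space of `A` when `Aᵀ A` is invertible, and `0` otherwise
(junk value of `⁻¹`). -/
noncomputable def colProj (A : Matrix m n R) : Matrix m m R := A * (Aᵀ * A)⁻¹ * Aᵀ

theorem transpose_mul_colProj {A : Matrix m n R} (hA : IsUnit (Aᵀ * A)) :
    Aᵀ * colProj A = Aᵀ := by
  rw [colProj, ← Matrix.mul_assoc, ← Matrix.mul_assoc,
    mul_nonsing_inv _ ((isUnit_iff_isUnit_det _).mp hA), Matrix.one_mul]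

theorem colProj_mul_colProj_of_eq_mul [Fintype k] [DecidableEq k] {A : Matrix m n R}
    (hA : IsUnit (Aᵀ * A)) {B : Matrix m k R} {C : Matrix n k R} (hB : B = A * C) :
    colProj B * colProj A = colProj B := by
  have hBA : Bᵀ * colProj A = Bᵀ := by
    rw [hB, transpose_mul, Matrix.mul_assoc, transpose_mul_colProj hA]
  rw [colProj, Matrix.mul_assoc, hBA]

theorem colProj_mulVec_eq_zero {B : Matrix m n R} {v : m → R} (hv : Bᵀ *ᵥ v = 0) :
    colProj B *ᵥ v = 0 := by
  rw [colProj, ← mulVec_mulVec, hv, mulVec_zero]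

end colProj

theorem fromCols_mul_fromRows_one_zero [Fintype n] [DecidableEq n] [Fintype k]
    (A : Matrix m n R) (B : Matrix m k R) :
    fromCols A B * fromRows (1 : Matrix n n R) (0 : Matrix k n R) = A := by
  rw [fromCols_mul_fromRows, Matrix.mul_one, Matrix.mul_zero, add_zero]

theorem transpose_fromRows_fromRows_zero_mulVec_eq_zero {m₁ m₂ m₃ : Type*} [Fintype m₁]
    [Fintype m₂] [Fintype m₃] (A : Matrix m₁ n R) (B : Matrix m₂ n R)
    {v : m₁ ⊕ (m₂ ⊕ m₃) → R} (hv₁ : ∀ i, v (Sum.inl i) = 0)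
    (hv₂ : ∀ i, v (Sum.inr (Sum.inl i)) = 0) :
    (fromRows A (fromRows B (0 : Matrix m₃ n R)))ᵀ *ᵥ v = 0 := by
  funext j
  simp [mulVec, dotProduct, Fintype.sum_sum_type, hv₁, hv₂]

theorem one_sub_mulVec_add_mulVec_eq_of_mul_eq [Fintype m] [DecidableEq m] {Q P : Matrix m m R}
    (hQP : Q * P = Q) {w w' : m → R} (hw' : Q *ᵥ w' = 0) :
    (1 - Q) *ᵥ (P *ᵥ (w + w')) + Q *ᵥ w = P *ᵥ (w + w') := by
  have hQ : Q *ᵥ (P *ᵥ (w + w')) = Q *ᵥ w := by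
    rw [mulVec_mulVec, hQP, mulVec_add, hw', add_zero]
  rw [sub_mulVec, one_mulVec, hQ, sub_add_cancel]

end Matrix

theorem finetuned_equals_pretrained_overlap_general
    (d_r d_lap d_f n_r n_f n_t : ℕ)
    (R : Matrix (Fin d_r) (Fin n_r) ℝ) (L1 : Matrix (Fin d_lap) (Fin n_r) ℝ)
    (X_r : Matrix (Fin d_r ⊕ (Fin d_lap ⊕ Fin d_f)) (Fin n_r) ℝ)
    (hXr : X_r = Matrix.fromRows R (Matrix.fromRows L1 0))
    (X_f : Matrix (Fin d_r ⊕ (Fin d_lap ⊕ Fin d_f)) (Fin n_f) ℝ)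
    (X : Matrix (Fin d_r ⊕ (Fin d_lap ⊕ Fin d_f)) (Fin n_r ⊕ Fin n_f) ℝ)
    (hX : X = Matrix.fromCols X_r X_f)
    (hXinv : IsUnit (Xᵀ * X))
    (wr wl wf : Fin d_r ⊕ (Fin d_lap ⊕ Fin d_f) → ℝ)
    (hwf1 : ∀ i, wf (Sum.inl i) = 0) (hwf2 : ∀ i, wf (Sum.inr (Sum.inl i)) = 0)
    (wstar : Fin d_r ⊕ (Fin d_lap ⊕ Fin d_f) → ℝ) (hws : wstar = wr + wl + wf)
    (S : Matrix (Fin n_r) (Fin n_t) ℝ)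
    (X_t : Matrix (Fin d_r ⊕ (Fin d_lap ⊕ Fin d_f)) (Fin n_t) ℝ) (hXt : X_t = X_r * S)
    (P P_t : Matrix (Fin d_r ⊕ (Fin d_lap ⊕ Fin d_f)) (Fin d_r ⊕ (Fin d_lap ⊕ Fin d_f)) ℝ)
    (hP : P = X * (Xᵀ * X)⁻¹ * Xᵀ)
    (hPt : P_t = X_t * (X_tᵀ * X_t)⁻¹ * X_tᵀ)
    (w_o w_t : Fin d_r ⊕ (Fin d_lap ⊕ Fin d_f) → ℝ)
    (hwo : w_o = P *ᵥ wstar)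
    (hwt : w_t = (1 - P_t) *ᵥ w_o + P_t *ᵥ (wr + wl)) :
    w_t = w_o := by
  change P = colProj X at hP
  change P_t = colProj X_t at hPt
  have hXt_eq : X_t = X * (fromRows (1 : Matrix (Fin n_r) (Fin n_r) ℝ)
      (0 : Matrix (Fin n_f) (Fin n_r) ℝ) * S) := by
    rw [← Matrix.mul_assoc, hX, fromCols_mul_fromRows_one_zero, hXt]
  have hPt_P : P_t * P = P_t := by
    rw [hPt, hP]
    exact colProj_mul_colProj_of_eq_mul hXinv hXt_eq
  have hPt_wf : P_t *ᵥ wf = 0 := by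
    rw [hPt]
    apply colProj_mulVec_eq_zero
    rw [hXt, transpose_mul, ← mulVec_mulVec, hXr,
      transpose_fromRows_fromRows_zero_mulVec_eq_zero R L1 hwf1 hwf2, mulVec_zero]
  rw [hwt, hwo, hws]
  exact one_sub_mulVec_add_mulVec_eq_of_mul_eq hPt_P hPt_wf

/-- finetuned_equals_pretrained_overlap -/
theorem finetuned_equals_pretrained_overlap
    (d_r d_lap d_f n_r n_f n_t : ℕ)
    (hd_r : 0 < d_r) (hd_lap : 0 < d_lap) (hd_f : 0 < d_f)
    (hn_r : 0 < n_r) (hn_f : 0 < n_f) (hn_t : 0 < n_t)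
    (R : Matrix (Fin d_r) (Fin n_r) ℝ) (L1 : Matrix (Fin d_lap) (Fin n_r) ℝ)
    (L2 : Matrix (Fin d_lap) (Fin n_f) ℝ) (F : Matrix (Fin d_f) (Fin n_f) ℝ)
    (X_r : Matrix (Fin d_r ⊕ (Fin d_lap ⊕ Fin d_f)) (Fin n_r) ℝ)
    (hXr : X_r = Matrix.fromRows R (Matrix.fromRows L1 0))
    (X_f : Matrix (Fin d_r ⊕ (Fin d_lap ⊕ Fin d_f)) (Fin n_f) ℝ)
    (hXf : X_f = Matrix.fromRows 0 (Matrix.fromRows L2 F))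
    (X : Matrix (Fin d_r ⊕ (Fin d_lap ⊕ Fin d_f)) (Fin n_r ⊕ Fin n_f) ℝ)
    (hX : X = Matrix.fromCols X_r X_f)
    (hXinv : IsUnit (Xᵀ * X)) (hXrinv : IsUnit (X_rᵀ * X_r)) (hXfinv : IsUnit (X_fᵀ * X_f))
    (wr wl wf : Fin d_r ⊕ (Fin d_lap ⊕ Fin d_f) → ℝ)
    (hwr : ∀ i, wr (Sum.inr i) = 0)
    (hwl1 : ∀ i, wl (Sum.inl i) = 0) (hwl2 : ∀ i, wl (Sum.inr (Sum.inr i)) = 0)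
    (hwf1 : ∀ i, wf (Sum.inl i) = 0) (hwf2 : ∀ i, wf (Sum.inr (Sum.inl i)) = 0)
    (wstar : Fin d_r ⊕ (Fin d_lap ⊕ Fin d_f) → ℝ) (hws : wstar = wr + wl + wf)
    (y_r : Fin n_r → ℝ) (hyr : y_r = X_rᵀ *ᵥ wstar)
    (y_f : Fin n_f → ℝ) (hyf : y_f = X_fᵀ *ᵥ wstar)
    (S : Matrix (Fin n_r) (Fin n_t) ℝ)
    (X_t : Matrix (Fin d_r ⊕ (Fin d_lap ⊕ Fin d_f)) (Fin n_t) ℝ) (hXt : X_t = X_r * S)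
    (hXtinv : IsUnit (X_tᵀ * X_t))
    (P P_r P_t : Matrix (Fin d_r ⊕ (Fin d_lap ⊕ Fin d_f)) (Fin d_r ⊕ (Fin d_lap ⊕ Fin d_f)) ℝ)
    (hP : P = X * (Xᵀ * X)⁻¹ * Xᵀ)
    (hPr : P_r = X_r * (X_rᵀ * X_r)⁻¹ * X_rᵀ)
    (hPt : P_t = X_t * (X_tᵀ * X_t)⁻¹ * X_tᵀ)
    (w_o w_t w_g : Fin d_r ⊕ (Fin d_lap ⊕ Fin d_f) → ℝ)
    (hwo : w_o = P *ᵥ wstar)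
    (hwt : w_t = (1 - P_t) *ᵥ w_o + P_t *ᵥ (wr + wl))
    (hwg : w_g = P_r *ᵥ (wr + wl)) :
    w_t = w_o :=
  finetuned_equals_pretrained_overlap_general d_r d_lap d_f n_r n_f n_t R L1 X_r hXr X_f X hX hXinv
    wr wl wf hwf1 hwf2 wstar hws S X_t hXt P P_t hP hPt w_o w_t hwo hwt
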